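/- For the logistic map with r = 4, the probability density ρ(x) = 1/(π·√(x(1−x))) on (0,1) is invariant: for every interval [c,d] ⊆ [0,1], ∫_{L⁻¹([c,d])} ρ(x) dx = ∫_c^d ρ(x) dx, where L(x) = 4x(1−x). -/

import Mathlib

/-!
The density `ρ x = 1 / (π √(x (1 - x)))` has the primitive `F x = arcsin (2x - 1) / π` on `[0, 1]`.
Write `c = 1 - s²` and `d = 1 - t²` with `0 ≤ t ≤ s ≤ 1`. Since `4x(1 - x) = 1 - (2x - 1)²`, the
preimage of `[c, d]` is the pair of intervals `t ≤ |2x - 1| ≤ s`, on whose endpoints `F` takes the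
values `± arcsin s / π`, `± arcsin t / π`. On the other side, the double-angle formula gives
`F (1 - s²) = 1/2 - 2 arcsin s / π`, so both integrals equal `2 (arcsin s - arcsin t) / π`.
-/

open Real MeasureTheory Set

theorem setIntegral_Icc_union_Icc {E : Type*} [NormedAddCommGroup E] [NormedSpace ℝ E]
    {μ : Measure ℝ} [NullSingletonClass μ] {f : ℝ → E} {a b c d : ℝ} (hbc : b ≤ c)
    (hab : IntegrableOn f (Icc a b) μ) (hcd : IntegrableOn f (Icc c d) μ) :
    ∫ x in Icc a b ∪ Icc c d, f x ∂μ = ∫ x in Icc a b, f x ∂μ + ∫ x in Icc c d, f x ∂μ := by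
  rw [← setIntegral_congr_set (Ioc_ae_eq_Icc.union Ioc_ae_eq_Icc),
    ← setIntegral_congr_set Ioc_ae_eq_Icc, ← setIntegral_congr_set Ioc_ae_eq_Icc]
  exact setIntegral_union (Ioc_disjoint_Ioc_of_le hbc) measurableSet_Ioc
    (hab.mono_set Ioc_subset_Icc_self) (hcd.mono_set Ioc_subset_Icc_self)

theorem arcsin_one_sub_two_mul_sq {u : ℝ} (h0 : 0 ≤ u) (h1 : u ≤ 1) :
    arcsin (1 - 2 * u ^ 2) = π / 2 - 2 * arcsin u := by
  have h_sin : sin (π / 2 - 2 * arcsin u) = 1 - 2 * u ^ 2 := by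
    rw [sin_pi_div_two_sub, cos_two_mul, cos_arcsin, sq_sqrt (by nlinarith)]
    ring
  have h_nonneg : 0 ≤ arcsin u := arcsin_nonneg.2 h0
  have h_le : arcsin u ≤ π / 2 := arcsin_le_pi_div_two u
  rw [← h_sin, arcsin_sin] <;> linarith

theorem logistic_preimage_Icc {s t : ℝ} (ht : 0 ≤ t) (hts : t ≤ s) (hs : s ≤ 1) :
    (fun x : ℝ => 4 * x * (1 - x)) ⁻¹' Icc (1 - s ^ 2) (1 - t ^ 2) ∩ Icc 0 1 =
      Icc ((1 - s) / 2) ((1 - t) / 2) ∪ Icc ((1 + t) / 2) ((1 + s) / 2) := by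
  ext x
  simp only [mem_inter_iff, mem_preimage, mem_Icc, mem_union]
  constructor
  · rintro ⟨⟨h_lower, h_upper⟩, -, -⟩
    rcases le_or_gt (2 * x - 1) 0 with h | h
    · exact Or.inl ⟨by nlinarith, by nlinarith⟩
    · exact Or.inr ⟨by nlinarith, by nlinarith⟩
  · rintro (⟨h_lower, h_upper⟩ | ⟨h_lower, h_upper⟩) <;>
      exact ⟨⟨by nlinarith, by nlinarith⟩, by linarith, by linarith⟩

noncomputable def arcsineDensity (x : ℝ) : ℝ := 1 / (π * √(x * (1 - x)))

noncomputable def arcsinePrimitive (x : ℝ) : ℝ := arcsin (2 * x - 1) / π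

theorem continuous_arcsinePrimitive : Continuous arcsinePrimitive := by
  unfold arcsinePrimitive
  fun_prop

theorem hasDerivAt_arcsinePrimitive {x : ℝ} (hx0 : 0 < x) (hx1 : x < 1) :
    HasDerivAt arcsinePrimitive (arcsineDensity x) x := by
  have h_arcsin := hasDerivAt_arcsin (x := 2 * x - 1) (by linarith) (by linarith)
  have h_affine : HasDerivAt (fun x : ℝ => 2 * x - 1) 2 x := by
    simpa using ((hasDerivAt_id x).const_mul 2).sub_const 1
  refine ((h_arcsin.comp x h_affine).div_const π).congr_deriv ?_
  have h_sqrt : √(1 - (2 * x - 1) ^ 2) = 2 * √(x * (1 - x)) := by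
    rw [show 1 - (2 * x - 1) ^ 2 = 2 ^ 2 * (x * (1 - x)) by ring, sqrt_mul (by positivity),
      sqrt_sq zero_le_two]
  have h_pos : 0 < √(x * (1 - x)) := sqrt_pos.2 (by nlinarith)
  rw [arcsineDensity, h_sqrt]
  field_simp

theorem integrableOn_arcsineDensity_Icc {a b : ℝ} (ha : 0 ≤ a) (hb : b ≤ 1) :
    IntegrableOn arcsineDensity (Icc a b) := by
  rw [integrableOn_Icc_iff_integrableOn_Ioc]
  exact intervalIntegral.integrableOn_deriv_of_nonneg continuous_arcsinePrimitive.continuousOn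
    (fun x hx => hasDerivAt_arcsinePrimitive (by linarith [hx.1]) (by linarith [hx.2]))
    (fun x _ => by unfold arcsineDensity; positivity)

theorem integral_Icc_arcsineDensity {a b : ℝ} (ha : 0 ≤ a) (hab : a ≤ b) (hb : b ≤ 1) :
    ∫ x in Icc a b, arcsineDensity x = arcsinePrimitive b - arcsinePrimitive a := by
  rw [integral_Icc_eq_integral_Ioc, ← intervalIntegral.integral_of_le hab]
  exact intervalIntegral.integral_eq_sub_of_hasDerivAt_of_le hab
    continuous_arcsinePrimitive.continuousOn
    (fun x hx => hasDerivAt_arcsinePrimitive (by linarith [hx.1]) (by linarith [hx.2]))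
    ((intervalIntegrable_iff_integrableOn_Icc_of_le hab).2 (integrableOn_arcsineDensity_Icc ha hb))

theorem arcsinePrimitive_half_add (s : ℝ) : arcsinePrimitive ((1 + s) / 2) = arcsin s / π := by
  rw [arcsinePrimitive]
  ring_nf

theorem arcsinePrimitive_half_sub (s : ℝ) :
    arcsinePrimitive ((1 - s) / 2) = -(arcsin s / π) := by
  rw [arcsinePrimitive, show 2 * ((1 - s) / 2) - 1 = -s by ring, arcsin_neg, neg_div]

theorem arcsinePrimitive_one_sub_sq {s : ℝ} (h0 : 0 ≤ s) (h1 : s ≤ 1) :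
    arcsinePrimitive (1 - s ^ 2) = 1 / 2 - 2 * (arcsin s / π) := by
  rw [arcsinePrimitive, show 2 * (1 - s ^ 2) - 1 = 1 - 2 * s ^ 2 by ring,
    arcsin_one_sub_two_mul_sq h0 h1]
  field_simp

theorem logistic_invariant_density (c d : ℝ) (hc : 0 ≤ c) (hcd : c ≤ d) (hd : d ≤ 1) :
    ∫ x in ((fun x : ℝ => 4 * x * (1 - x)) ⁻¹' Set.Icc c d ∩ Set.Icc 0 1),
        1 / (Real.pi * Real.sqrt (x * (1 - x))) =
      ∫ x in Set.Icc c d, 1 / (Real.pi * Real.sqrt (x * (1 - x))) := by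
  show ∫ x in _, arcsineDensity x = ∫ x in _, arcsineDensity x
  obtain ⟨s, hs0, rfl⟩ : ∃ s, 0 ≤ s ∧ c = 1 - s ^ 2 :=
    ⟨√(1 - c), sqrt_nonneg _, by rw [sq_sqrt (by linarith)]; ring⟩
  obtain ⟨t, ht0, rfl⟩ : ∃ t, 0 ≤ t ∧ d = 1 - t ^ 2 :=
    ⟨√(1 - d), sqrt_nonneg _, by rw [sq_sqrt (by linarith)]; ring⟩
  have hs1 : s ≤ 1 := by nlinarith
  have hts : t ≤ s := by nlinarith
  rw [logistic_preimage_Icc ht0 hts hs1, setIntegral_Icc_union_Icc (by linarith)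
      (integrableOn_arcsineDensity_Icc (by linarith) (by linarith))
      (integrableOn_arcsineDensity_Icc (by linarith) (by linarith)),
    integral_Icc_arcsineDensity (by linarith) (by linarith) (by linarith),
    integral_Icc_arcsineDensity (by linarith) (by linarith) (by linarith),
    integral_Icc_arcsineDensity hc hcd hd, arcsinePrimitive_half_add, arcsinePrimitive_half_add,
    arcsinePrimitive_half_sub, arcsinePrimitive_half_sub, arcsinePrimitive_one_sub_sq hs0 hs1,
    arcsinePrimitive_one_sub_sq ht0 (hts.trans hs1)]
  ring
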